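/- arXiv:2112.12908 — 3 statements merged into one kernel-verified Lean document; each statement's English description precedes it below -/
import Mathlib

section
/- Let G be a real-valued Gaussian random variable with mean -σ²/2 and variance σ² for some σ > 0. Then E[min(1, e^G)] = 2Φ(-σ/2), where Φ is the standard normal cumulative distribution function. -/
/-!
Multiplying the density of `N(m, v)` by `e^x` gives `e^(m + v/2)` times the density of
`N(m + v, v)`; for `m = -v/2` the factor is `1` and the tilted law is `N(v/2, v)`, the reflection
of `N(m, v)`. Splitting `min 1 (exp x)` at `0`, the expectation is therefore
`P(N(v/2, v) ≤ 0) + P(N(-v/2, v) > 0)`, two equal probabilities, each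
`Φ(-σ/2)` when `v = σ²`.
-/

open MeasureTheory ProbabilityTheory Real

/-- The cumulative distribution function of the standard normal distribution `N(0,1)`. -/
noncomputable def stdNormalCDF (x : ℝ) : ℝ :=
  ∫ t in Set.Iic x, (Real.sqrt (2 * Real.pi))⁻¹ * Real.exp (-t ^ 2 / 2)

open Set NNReal

lemma gaussianPDFReal_mul_exp (μ : ℝ) (v : ℝ≥0) (t x : ℝ) :
    gaussianPDFReal μ v x * exp (t * x) =
      exp (μ * t + v * t ^ 2 / 2) * gaussianPDFReal (μ + v * t) v x := by
  rcases eq_or_ne v 0 with rfl | hv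
  · simp [gaussianPDFReal_zero_var]
  have hv' : (v : ℝ) ≠ 0 := NNReal.coe_ne_zero.mpr hv
  simp only [gaussianPDFReal]
  rw [mul_left_comm, mul_assoc, ← exp_add, ← exp_add]
  congr 2
  field_simp
  ring

lemma measureReal_gaussianReal_eq_setIntegral (μ : ℝ) {v : ℝ≥0} (hv : v ≠ 0) (s : Set ℝ) :
    (gaussianReal μ v).real s = ∫ x in s, gaussianPDFReal μ v x := by
  rw [measureReal_def, gaussianReal_apply_eq_integral _ hv, ENNReal.toReal_ofReal
    (integral_nonneg fun _ ↦ gaussianPDFReal_nonneg _ _ _)]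

lemma setIntegral_exp_mul_gaussianReal (μ : ℝ) {v : ℝ≥0} (hv : v ≠ 0) (t : ℝ) {s : Set ℝ}
    (hs : MeasurableSet s) :
    ∫ x in s, exp (t * x) ∂gaussianReal μ v =
      exp (μ * t + v * t ^ 2 / 2) * (gaussianReal (μ + v * t) v).real s := by
  rw [gaussianReal_of_var_ne_zero _ hv, restrict_withDensity hs,
    integral_withDensity_eq_integral_toReal_smul (measurable_gaussianPDF _ _)
      (ae_of_all _ fun _ ↦ gaussianPDF_lt_top),
    measureReal_gaussianReal_eq_setIntegral _ hv, ← integral_const_mul]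
  simp_rw [toReal_gaussianPDF, smul_eq_mul, gaussianPDFReal_mul_exp]

lemma measureReal_gaussianReal_Ioi_eq_neg_Iic (μ : ℝ) {v : ℝ≥0} (hv : v ≠ 0) (c : ℝ) :
    (gaussianReal μ v).real (Ioi c) = (gaussianReal (-μ) v).real (Iic (-c)) := by
  have := nullSingletonClass_gaussianReal (μ := -μ) hv
  rw [← measureReal_congr Iio_ae_eq_Iic, ← gaussianReal_map_neg,
    map_measureReal_apply measurable_neg measurableSet_Iio]
  congr 1
  ext x
  simp

lemma measureReal_gaussianReal_zero_one_Iic (x : ℝ) :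
    (gaussianReal 0 1).real (Iic x) = stdNormalCDF x := by
  rw [measureReal_gaussianReal_eq_setIntegral _ one_ne_zero]
  simp [stdNormalCDF, gaussianPDFReal]

lemma gaussianReal_eq_map_mul_add (μ σ : ℝ) :
    gaussianReal μ (σ ^ 2).toNNReal = (gaussianReal 0 1).map (fun x ↦ σ * x + μ) := by
  rw [show (fun x ↦ σ * x + μ) = (· + μ) ∘ (σ * ·) from rfl,
    ← Measure.map_map (measurable_add_const μ) (measurable_const_mul σ),
    gaussianReal_map_const_mul, gaussianReal_map_add_const, mul_zero, zero_add, mul_one]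
  congr
  ext
  simp [sq_nonneg]

lemma measureReal_gaussianReal_Iic (μ : ℝ) {σ : ℝ} (hσ : 0 < σ) (c : ℝ) :
    (gaussianReal μ (σ ^ 2).toNNReal).real (Iic c) = stdNormalCDF ((c - μ) / σ) := by
  rw [gaussianReal_eq_map_mul_add, map_measureReal_apply (by fun_prop) measurableSet_Iic,
    ← measureReal_gaussianReal_zero_one_Iic]
  congr 1
  ext x
  simp [le_div_iff₀ hσ, mul_comm x, le_sub_iff_add_le]

lemma integral_min_one_exp {μ : Measure ℝ} [IsFiniteMeasure μ] :
    ∫ x, min 1 (exp x) ∂μ = ∫ x in Iic 0, exp x ∂μ + μ.real (Ioi 0) := by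
  have hint : Integrable (fun x ↦ min 1 (exp x)) μ := by
    refine Integrable.of_bound (by fun_prop) 1 (ae_of_all _ fun x ↦ ?_)
    rw [norm_of_nonneg (by positivity)]
    exact min_le_left _ _
  rw [← integral_add_compl measurableSet_Iic hint, compl_Iic,
    setIntegral_congr_fun measurableSet_Iic fun x hx ↦ min_eq_right (exp_le_one_iff.mpr hx),
    setIntegral_congr_fun measurableSet_Ioi fun x hx ↦ min_eq_left (one_le_exp (le_of_lt hx)),
    setIntegral_const, smul_eq_mul, mul_one]

/-- If `G ~ N(-σ²/2, σ²)` with `σ > 0`, then `E[min(1, e^G)] = 2Φ(-σ/2)`. -/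
theorem expectation_min_one_exp_gaussian (σ : ℝ) (hσ : 0 < σ) :
    ∫ g, min 1 (Real.exp g) ∂(gaussianReal (-σ ^ 2 / 2) (Real.toNNReal (σ ^ 2))) =
      2 * stdNormalCDF (-σ / 2) := by
  set v := (σ ^ 2).toNNReal
  have hv : v ≠ 0 := by simp [v, hσ.ne']
  have hvσ : (v : ℝ) = σ ^ 2 := Real.coe_toNNReal _ (sq_nonneg σ)
  calc ∫ x, min 1 (exp x) ∂gaussianReal (-σ ^ 2 / 2) v
      = ∫ x in Iic 0, exp (1 * x) ∂gaussianReal (-σ ^ 2 / 2) v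
          + (gaussianReal (-σ ^ 2 / 2) v).real (Ioi 0) := by
        simp only [integral_min_one_exp, one_mul]
    _ = exp (-σ ^ 2 / 2 * 1 + v * 1 ^ 2 / 2) * (gaussianReal (-σ ^ 2 / 2 + v * 1) v).real (Iic 0)
          + (gaussianReal (-(-σ ^ 2 / 2)) v).real (Iic (-0)) := by
      rw [setIntegral_exp_mul_gaussianReal _ hv _ measurableSet_Iic,
        measureReal_gaussianReal_Ioi_eq_neg_Iic _ hv]
    _ = 2 * (gaussianReal (σ ^ 2 / 2) v).real (Iic 0) := by
      rw [hvσ, show -σ ^ 2 / 2 * 1 + σ ^ 2 * 1 ^ 2 / 2 = 0 by ring,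
        show -σ ^ 2 / 2 + σ ^ 2 * 1 = σ ^ 2 / 2 by ring, neg_div, neg_neg, neg_zero, exp_zero]
      ring
    _ = 2 * stdNormalCDF (-σ / 2) := by
      rw [measureReal_gaussianReal_Iic _ hσ]
      congr 2
      field_simp
      ring
end

section
/- Consider a mixture density γ(x) ∝ Σ_{j=1}^J w_j |Σ_j|^{-1/2} g(Σ_j^{-1/2}(x - μ_j)) on ℝ^d, where g is a fixed density with global maximum at 0, each Σ_j is symmetric positive definite, and w_j > 0. If each component is power-tempered, i.e. b_j(x,β) = [w_j |Σ_j|^{-1/2} g(Σ_j^{-1/2}(x-μ_j))]^β, and written in normalised form b_j(x,β) = W_{(j,β)} · [g(s_j(x))]^β / ∫ [g(s_j(x))]^β dx, then the resulting mixture weights satisfy W_{(j,β)} ∝ w_j^β |Σ_j|^{(1-β)/2}. -/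
/-! Since `Σ_j^{1/2}` has determinant `|Σ_j|^{1/2}`, the substitution `u = Σ_j^{-1/2}(x - μ_j)` gives
`∫ g(s_j x)^β dx = |Σ_j|^{1/2} ∫ g^β`. Evaluating the defining identity of `W_j` at a point where
`g(s_j x) > 0` (there is one, as `∫ g ∘ s_j = |Σ_j|^{1/2} ≠ 0`) and cancelling `g(s_j x)^β` yields
`W_j = w_j^β |Σ_j|^{-β/2} · |Σ_j|^{1/2} ∫ g^β`. -/

open MeasureTheory Real
open scoped Matrix MatrixOrder ComplexOrder

theorem Matrix.PosSemidef.sqrt_eq_eigenvectorUnitary_conj {𝕜 n : Type*} [RCLike 𝕜] [Fintype n]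
    [DecidableEq n] {A : Matrix n n 𝕜} (hA : A.PosSemidef) :
    CFC.sqrt A = (hA.isHermitian.eigenvectorUnitary : Matrix n n 𝕜) *
      Matrix.diagonal ((RCLike.ofReal : ℝ → 𝕜) ∘ (√·) ∘ hA.isHermitian.eigenvalues) *
      (star hA.isHermitian.eigenvectorUnitary : Matrix n n 𝕜) := by
  rw [CFC.sqrt_eq_cfc, cfc_nnreal_eq_real _ A hA.nonneg, hA.isHermitian.cfc_eq]
  simp only [Matrix.IsHermitian.cfc, Unitary.conjStarAlgAut_apply, Real.coe_sqrt,
    Real.coe_toNNReal']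
  congr 3
  funext i
  simp [hA.eigenvalues_nonneg i]

theorem integral_comp_mulVec_sub {ι E : Type*} [Fintype ι] [DecidableEq ι]
    [NormedAddCommGroup E] [NormedSpace ℝ E] (f : (ι → ℝ) → E) {A : Matrix ι ι ℝ}
    (hA : A.det ≠ 0) (μ : ι → ℝ) :
    ∫ x, f (A *ᵥ (x - μ)) = |A.det|⁻¹ • ∫ u, f u := by
  have : Invertible A := A.invertibleOfIsUnitDet hA.isUnit
  have hemb : MeasurableEmbedding (Matrix.toLin' A) :=
    (A.toLinearEquiv' this).toContinuousLinearEquiv.toHomeomorph.measurableEmbedding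
  rw [integral_sub_right_eq_self (fun v => f (A *ᵥ v)) μ, ← abs_inv,
    ← ENNReal.toReal_ofReal (abs_nonneg A.det⁻¹), ← integral_smul_measure,
    ← Real.map_matrix_volume_pi_eq_smul_volume_pi hA, hemb.integral_map]
  rfl

theorem Matrix.PosDef.integral_comp_inv_sqrt_mulVec_sub {ι E : Type*} [Fintype ι]
    [DecidableEq ι] [NormedAddCommGroup E] [NormedSpace ℝ E] {S : Matrix ι ι ℝ}
    (hS : S.PosDef) (f : (ι → ℝ) → E) (μ : ι → ℝ) :
    ∫ x, f ((CFC.sqrt S)⁻¹ *ᵥ (x - μ)) = √S.det • ∫ u, f u := by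
  have hdet : ((CFC.sqrt S)⁻¹).det = (√S.det)⁻¹ := by
    rw [Matrix.det_nonsing_inv, hS.posSemidef.det_sqrt, RCLike.sqrt_real, Ring.inverse_eq_inv']
  have hpos : 0 < √S.det := Real.sqrt_pos.mpr hS.det_pos
  rw [integral_comp_mulVec_sub f (hdet ▸ (inv_pos.mpr hpos).ne') μ, hdet, abs_inv, inv_inv,
    abs_of_pos hpos]

theorem eq_mul_of_mul_eq_mul_div {K : Type*} [Field K] {a p w I : K} (ha : a ≠ 0)
    (hp : p ≠ 0) (h : a * p = w * p / I) : w = a * I := by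
  -- `I = 0` is ruled out by `h`, since `w * p / 0 = 0`.
  rcases eq_or_ne I 0 with rfl | hI
  · simp [ha, hp] at h
  · field_simp at h
    exact h.symm

theorem crmd_power_tempering_weights_general (d J : ℕ)
    (g : (Fin d → ℝ) → ℝ) (hgnn : ∀ x, 0 ≤ g x)
    (hgint : ∫ x, g x = 1)
    (w : Fin J → ℝ) (hw : ∀ j, 0 < w j)
    (μ : Fin J → Fin d → ℝ) (S : Fin J → Matrix (Fin d) (Fin d) ℝ)
    (hS : ∀ j, (S j).PosDef)
    (s : Fin J → (Fin d → ℝ) → (Fin d → ℝ))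
    (hs : ∀ j x, s j x = ((((hS j).isHermitian.eigenvectorUnitary : Matrix (Fin d) (Fin d) ℝ) * Matrix.diagonal ((RCLike.ofReal : ℝ → ℝ) ∘ (√·) ∘ (hS j).isHermitian.eigenvalues) * (star (hS j).isHermitian.eigenvectorUnitary : Matrix (Fin d) (Fin d) ℝ))⁻¹).mulVec (x - μ j))
    (β : ℝ)
    (W : Fin J → ℝ)
    (hW : ∀ j x,
      (w j * ((S j).det) ^ (-(1 : ℝ) / 2) * g (s j x)) ^ β =
        W j * (g (s j x)) ^ β / ∫ y, (g (s j y)) ^ β) :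
    ∃ c : ℝ, ∀ j, W j = c * (w j) ^ β * ((S j).det) ^ ((1 - β) / 2) := by
  refine ⟨∫ u, g u ^ β, fun j => ?_⟩
  have hsj : s j = fun x => (CFC.sqrt (S j))⁻¹ *ᵥ (x - μ j) := by
    funext x
    rw [hs, (hS j).posSemidef.sqrt_eq_eigenvectorUnitary_conj]
  have hdet := (hS j).det_pos
  have hwj := hw j
  obtain ⟨x, hx⟩ : ∃ x, g (s j x) ≠ 0 := by
    refine exists_ne_zero_of_integral_ne_zero (μ := volume) ?_
    rw [hsj, (hS j).integral_comp_inv_sqrt_mulVec_sub g, hgint]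
    positivity
  have hnorm : ∫ y, g (s j y) ^ β = √(S j).det * ∫ u, g u ^ β := by
    rw [hsj]
    exact (hS j).integral_comp_inv_sqrt_mulVec_sub (fun u => g u ^ β) (μ j)
  have hgx : 0 < g (s j x) := (hgnn _).lt_of_ne' hx
  have hWx := hW j x
  rw [mul_rpow (by positivity) hgx.le, hnorm] at hWx
  have hexp : (S j).det ^ (-(1 : ℝ) / 2 * β) * (S j).det ^ ((1 : ℝ) / 2) =
      (S j).det ^ ((1 - β) / 2) := by
    rw [← rpow_add hdet]
    ring_nf
  rw [eq_mul_of_mul_eq_mul_div (by positivity) (by positivity) hWx,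
    mul_rpow hwj.le (by positivity), ← rpow_mul hdet.le, sqrt_eq_rpow, ← hexp]
  ring

/-- Power-tempering a componentwise rescaled mixture distribution (CRMD) distorts the mixture
weights: if each component `a_j(x) = w_j |Σ_j|^{-1/2} g(s_j(x))` is raised to the power `β` and
renormalised as `W_{(j,β)} [g(s_j(x))]^β / ∫ [g(s_j(x))]^β dx`, then
`W_{(j,β)} ∝ w_j^β |Σ_j|^{(1-β)/2}`. -/
theorem crmd_power_tempering_weights (d J : ℕ)
    (g : (Fin d → ℝ) → ℝ) (hgmeas : Measurable g) (hgnn : ∀ x, 0 ≤ g x)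
    (hgint : ∫ x, g x = 1) (hgmax : ∀ x, g x ≤ g 0)
    (w : Fin J → ℝ) (hw : ∀ j, 0 < w j)
    (μ : Fin J → Fin d → ℝ) (S : Fin J → Matrix (Fin d) (Fin d) ℝ)
    (hS : ∀ j, (S j).PosDef)
    (s : Fin J → (Fin d → ℝ) → (Fin d → ℝ))
    (hs : ∀ j x, s j x = ((((hS j).isHermitian.eigenvectorUnitary : Matrix (Fin d) (Fin d) ℝ) * Matrix.diagonal ((RCLike.ofReal : ℝ → ℝ) ∘ (√·) ∘ (hS j).isHermitian.eigenvalues) * (star (hS j).isHermitian.eigenvectorUnitary : Matrix (Fin d) (Fin d) ℝ))⁻¹).mulVec (x - μ j))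
    (β : ℝ) (hβ : 0 < β)
    (W : Fin J → ℝ)
    (hW : ∀ j x,
      (w j * ((S j).det) ^ (-(1 : ℝ) / 2) * g (s j x)) ^ β =
        W j * (g (s j x)) ^ β / ∫ y, (g (s j y)) ^ β) :
    ∃ c : ℝ, ∀ j, W j = c * (w j) ^ β * ((S j).det) ^ ((1 - β) / 2) :=
  crmd_power_tempering_weights_general d J g hgnn hgint w hw μ S hS s hs β W hW
end

section
/- In the setting of the CRMD mixture γ(x) ∝ Σ_j a_j(x) with a_j(x) = w_j |Σ_j|^{-1/2} g(Σ_j^{-1/2}(x - μ_j)) and g having global maximum g(0), if one uses the weight-preserving tempering b_j(x,β) = a_j(x)^β a_j(μ_j)^{1-β}, then the normalised mixture weights are preserved: W_{(j,β)} ∝ w_j, independent of β. -/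
/-!
At the mode `x = μ_j` the standardisation `s_j` vanishes and the two tempered factors recombine,
so the defining identity reads `a_j(μ_j) = W_j g(0)^β / ∫ g(s_j)^β`. The substitution
`x = Σ_j^{1/2} u + μ_j` gives `∫ g(s_j)^β = |Σ_j|^{1/2} ∫ g^β`, which cancels the factor
`|Σ_j|^{-1/2}` in `a_j(μ_j) = w_j |Σ_j|^{-1/2} g(0)`; hence `W_j = g(0)^{1-β} (∫ g^β) w_j`.
Dividing by `g(0)^β` is legitimate because `g ≤ g(0)` and `∫ g = 1` force `g(0) > 0`.
-/

open MeasureTheory Real Matrix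

theorem pos_of_forall_le_of_integral_pos {α : Type*} [MeasurableSpace α] {μ : Measure α}
    {g : α → ℝ} {x₀ : α} (hmax : ∀ x, g x ≤ g x₀) (hint : 0 < ∫ x, g x ∂μ) :
    0 < g x₀ := by
  by_contra! h
  exact hint.not_ge (integral_nonpos fun x => (hmax x).trans h)

section ChangeOfVariables

variable {ι : Type*} [Fintype ι] [DecidableEq ι] {T : Matrix ι ι ℝ}

theorem integral_comp_mulVec (hT : T.det ≠ 0) (f : (ι → ℝ) → ℝ) :
    ∫ y, f (T *ᵥ y) = |T.det|⁻¹ * ∫ y, f y := by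
  have hinj : Function.Injective (toLin' T) :=
    mulVec_injective_iff_isUnit.mpr ((isUnit_iff_isUnit_det T).mpr hT.isUnit)
  have hemb : MeasurableEmbedding (toLin' T) :=
    (LinearMap.isClosedEmbedding_of_injective (LinearMap.ker_eq_bot.mpr hinj)).measurableEmbedding
  change ∫ y, f (toLin' T y) = _
  rw [← hemb.integral_map, Real.map_matrix_volume_pi_eq_smul_volume_pi hT, integral_smul_measure,
    ENNReal.toReal_ofReal (abs_nonneg _), abs_inv, smul_eq_mul]

theorem integral_comp_mulVec_sub_s6 (hT : T.det ≠ 0) (f : (ι → ℝ) → ℝ) (v : ι → ℝ) :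
    ∫ y, f (T *ᵥ (y - v)) = |T.det|⁻¹ * ∫ y, f y := by
  rw [integral_sub_right_eq_self (fun y => f (T *ᵥ y)) v, integral_comp_mulVec hT]

end ChangeOfVariables

section SpectralSqrt

variable {n : Type*} [Fintype n] [DecidableEq n] {A : Matrix n n ℝ}

theorem Matrix.PosSemidef.det_spectral_sqrt (hA : A.PosSemidef) :
    ((hA.1.eigenvectorUnitary : Matrix n n ℝ) *
        diagonal ((RCLike.ofReal : ℝ → ℝ) ∘ Real.sqrt ∘ hA.1.eigenvalues) *
        (star hA.1.eigenvectorUnitary : Matrix n n ℝ)).det = √A.det := by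
  rw [det_mul, det_mul, mul_right_comm, ← det_mul,
    Unitary.mul_star_self_of_mem (SetLike.coe_mem _), det_one, one_mul, det_diagonal,
    hA.1.det_eq_prod_eigenvalues]
  exact (Real.sqrt_prod _ fun i _ => hA.eigenvalues_nonneg i).symm

theorem Matrix.PosDef.integral_comp_inv_sqrt_mulVec_sub_s6 (hA : A.PosDef) (f : (n → ℝ) → ℝ)
    (v : n → ℝ) :
    ∫ y, f (((hA.posSemidef.1.eigenvectorUnitary : Matrix n n ℝ) *
        diagonal ((RCLike.ofReal : ℝ → ℝ) ∘ Real.sqrt ∘ hA.posSemidef.1.eigenvalues) *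
        (star hA.posSemidef.1.eigenvectorUnitary : Matrix n n ℝ))⁻¹ *ᵥ (y - v)) =
      √A.det * ∫ y, f y := by
  have hdet := hA.posSemidef.det_spectral_sqrt
  have hsqrt : 0 < √A.det := sqrt_pos.mpr hA.det_pos
  rw [integral_comp_mulVec_sub_s6 (by rw [det_nonsing_inv, hdet, Ring.inverse_eq_inv]; positivity),
    det_nonsing_inv, hdet, Ring.inverse_eq_inv, abs_inv,
    inv_inv, abs_of_pos hsqrt]

end SpectralSqrt

theorem crmd_weight_preserving_tempering_general (d J : ℕ)
    (g : (Fin d → ℝ) → ℝ)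
    (hgint : ∫ x, g x = 1) (hgmax : ∀ x, g x ≤ g 0)
    (w : Fin J → ℝ) (hw : ∀ j, 0 < w j)
    (μ : Fin J → Fin d → ℝ) (S : Fin J → Matrix (Fin d) (Fin d) ℝ)
    (hS : ∀ j, (S j).PosDef)
    (s : Fin J → (Fin d → ℝ) → (Fin d → ℝ))
    (hs : ∀ j x, s j x = ((((hS j).posSemidef.1.eigenvectorUnitary : Matrix (Fin d) (Fin d) ℝ) * Matrix.diagonal ((RCLike.ofReal : ℝ → ℝ) ∘ Real.sqrt ∘ (hS j).posSemidef.1.eigenvalues) * (star (hS j).posSemidef.1.eigenvectorUnitary : Matrix (Fin d) (Fin d) ℝ))⁻¹).mulVec (x - μ j))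
    (a : Fin J → (Fin d → ℝ) → ℝ)
    (ha : ∀ j x, a j x = w j * ((S j).det) ^ (-(1 : ℝ) / 2) * g (s j x))
    (β : ℝ)
    (W : Fin J → ℝ)
    (hW : ∀ j x,
      (a j x) ^ β * (a j (μ j)) ^ (1 - β) =
        W j * (g (s j x)) ^ β / ∫ y, (g (s j y)) ^ β) :
    ∃ c : ℝ, ∀ j, W j = c * w j := by
  have hg0 : 0 < g 0 := pos_of_forall_le_of_integral_pos hgmax (hgint ▸ one_pos)
  set K := ∫ y, g y ^ β
  refine ⟨g 0 ^ (1 - β) * K, fun j => ?_⟩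
  set D := (S j).det
  have hD : 0 < D := (hS j).det_pos
  have hnorm : ∫ y, g (s j y) ^ β = √D * K := by
    simp_rw [hs j]
    exact (hS j).integral_comp_inv_sqrt_mulVec_sub_s6 (fun v => g v ^ β) (μ j)
  have hsμ : s j (μ j) = 0 := by simp [hs]
  have hpeak : a j (μ j) = w j * D ^ (-(1 : ℝ) / 2) * g 0 := by rw [ha, hsμ]
  have hpos : 0 < a j (μ j) := hpeak ▸ mul_pos (mul_pos (hw j) (rpow_pos_of_pos hD _)) hg0
  have key := hW j (μ j)
  rw [← rpow_add hpos, add_sub_cancel, rpow_one, hsμ, hnorm] at key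
  have hK : K ≠ 0 := by
    rintro hK
    rw [hK, mul_zero, div_zero] at key
    exact hpos.ne' key
  have hDsqrt : D ^ (-(1 : ℝ) / 2) * √D = 1 := by
    rw [sqrt_eq_rpow, ← rpow_add hD]
    norm_num
  have hsplit : g 0 ^ β * g 0 ^ (1 - β) = g 0 := by
    rw [← rpow_add hg0, add_sub_cancel, rpow_one]
  rw [hpeak, eq_div_iff (mul_ne_zero (sqrt_pos.mpr hD).ne' hK)] at key
  apply mul_left_cancel₀ (rpow_pos_of_pos hg0 β).ne'
  linear_combination -key + (w j * g 0 * K) * hDsqrt - (K * w j) * hsplit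

/-- Weight-preserving tempering of a CRMD: if each component `a_j(x) = w_j |Σ_j|^{-1/2} g(s_j(x))`
is tempered as `b_j(x,β) = a_j(x)^β a_j(μ_j)^{1-β}` and renormalised as
`W_{(j,β)} [g(s_j(x))]^β / ∫ [g(s_j(x))]^β dx`, then the mixture weights are preserved:
`W_{(j,β)} ∝ w_j`, independently of `β`. -/
theorem crmd_weight_preserving_tempering (d J : ℕ)
    (g : (Fin d → ℝ) → ℝ) (hgmeas : Measurable g) (hgnn : ∀ x, 0 ≤ g x)
    (hgint : ∫ x, g x = 1) (hgmax : ∀ x, g x ≤ g 0)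
    (w : Fin J → ℝ) (hw : ∀ j, 0 < w j)
    (μ : Fin J → Fin d → ℝ) (S : Fin J → Matrix (Fin d) (Fin d) ℝ)
    (hS : ∀ j, (S j).PosDef)
    (s : Fin J → (Fin d → ℝ) → (Fin d → ℝ))
    (hs : ∀ j x, s j x = ((((hS j).posSemidef.1.eigenvectorUnitary : Matrix (Fin d) (Fin d) ℝ) * Matrix.diagonal ((RCLike.ofReal : ℝ → ℝ) ∘ Real.sqrt ∘ (hS j).posSemidef.1.eigenvalues) * (star (hS j).posSemidef.1.eigenvectorUnitary : Matrix (Fin d) (Fin d) ℝ))⁻¹).mulVec (x - μ j))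
    (a : Fin J → (Fin d → ℝ) → ℝ)
    (ha : ∀ j x, a j x = w j * ((S j).det) ^ (-(1 : ℝ) / 2) * g (s j x))
    (β : ℝ) (hβ : 0 < β)
    (W : Fin J → ℝ)
    (hW : ∀ j x,
      (a j x) ^ β * (a j (μ j)) ^ (1 - β) =
        W j * (g (s j x)) ^ β / ∫ y, (g (s j y)) ^ β) :
    ∃ c : ℝ, ∀ j, W j = c * w j :=
  crmd_weight_preserving_tempering_general d J g hgint hgmax w hw μ S hS s hs a ha β W hW
end
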